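/- arXiv:2001.00106 — 3 statements merged into one kernel-verified Lean document; each statement's English description precedes it below -/
import Mathlib

section
/- Let X and Y be measurable spaces, D a probability measure on X × Y, and f : X × Y → ℝ a measurable function with f(x,y) > 0 for all (x,y). Define φ(x,y) = -log f(x,y) and, for T ∈ ℝ, the confidence set C_T(x) = {y ∈ Y : f(x,y) ≥ exp(-T)}. Assume the pushforward measure of D under φ has no atoms. Fix ε ∈ [0,1], n ∈ ℕ with n ≥ 1, and k ∈ ℕ with k < n. For a sample z = (z₁,…,z_n) ∈ (X×Y)ⁿ let T̂(z) be the (k+1)-st largest value among φ(z₁),…,φ(z_n) (equivalently, the smallest T such that at most k indices i satisfy φ(z_i) > T). Then the n-fold product measure D^⊗n of the set { z : D({(x,y) : y ∉ C_{T̂(z)}(x)}) > ε } is at most Σ_{i=0}^{k} (n choose i) ε^i (1-ε)^{n-i}. -/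
open MeasureTheory Set
open scoped ENNReal

/-- The `(k+1)`-st largest coordinate of `t : Fin n → ℝ`, i.e. the `(k+1)`-st entry of `t`
sorted in nonincreasing order. -/
noncomputable def kthLargest {n : ℕ} (k : ℕ) (t : Fin n → ℝ) : ℝ :=
  (Multiset.sort (↑(List.ofFn t) : Multiset ℝ) (· ≤ ·)).getD (n - 1 - k) 0

/-! The law `μ` of `φ` under `D` has no atoms, so its CDF is continuous and there is a level `q`
with `μ (Ici q) = μ (Ioi q) = ε`. If the threshold `T̂(z)` of a sample has error
`μ (Ioi T̂(z)) > ε`, then `T̂(z) < q`, so at most `k` sample points lie in `A = φ ⁻¹' Ici q`.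
Since `D A = ε`, the number of sample points in `A` is binomial with parameters `n` and `ε`,
and the probability that it is at most `k` is the binomial tail. -/

theorem List.countP_le_length_sub_of_getElem_lt {α : Type*} [Preorder α] [DecidableLE α]
    {l : List α} (hl : l.Pairwise (· ≤ ·)) {j : ℕ} (hj : j < l.length) {s : α}
    (hs : l[j] < s) :
    l.countP (fun x => decide (s ≤ x)) ≤ l.length - (j + 1) := by
  have htake : (l.take (j + 1)).countP (fun x => decide (s ≤ x)) = 0 := by
    refine List.countP_eq_zero.2 fun x hx hsx => ?_
    obtain ⟨i, hi, rfl⟩ := List.mem_take_iff_getElem.1 hx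
    have hij : l[i] ≤ l[j] :=
      hl.rel_get_of_le (a := ⟨i, by omega⟩) (b := ⟨j, hj⟩) (by simp; omega)
    exact ((of_decide_eq_true hsx).trans hij).not_gt hs
  calc l.countP (fun x => decide (s ≤ x))
      = (l.take (j + 1)).countP (fun x => decide (s ≤ x))
        + (l.drop (j + 1)).countP (fun x => decide (s ≤ x)) := by
        rw [← List.countP_append, List.take_append_drop]
    _ ≤ (l.drop (j + 1)).length := by rw [htake, zero_add]; exact List.countP_le_length
    _ = l.length - (j + 1) := List.length_drop

open Finset in
theorem card_filter_le_of_kthLargest_lt {n k : ℕ} (hk : k < n) {t : Fin n → ℝ} {s : ℝ}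
    (h : kthLargest k t < s) : #{i | s ≤ t i} ≤ k := by
  set l := Multiset.sort (↑(List.ofFn t) : Multiset ℝ) (· ≤ ·)
  have hlen : l.length = n := by simp [l]
  have hcount : l.countP (fun x => decide (s ≤ x)) = #{i | s ≤ t i} := by
    rw [← Multiset.coe_countP, Multiset.sort_eq, ← Fin.univ_val_map, Multiset.countP_map]
    rfl
  have hj : n - 1 - k < l.length := by omega
  rw [kthLargest, List.getD_eq_getElem _ _ hj] at h
  have hsorted : l.Pairwise (· ≤ ·) := Multiset.pairwise_sort _ _
  have := List.countP_le_length_sub_of_getElem_lt hsorted hj h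
  omega

theorem ProbabilityTheory.continuous_cdf (μ : Measure ℝ) [IsProbabilityMeasure μ]
    [NullSingletonClass μ] : Continuous (cdf μ) := by
  refine continuous_iff_continuousAt.2 fun x =>
    (cdf μ).mono.continuousAt_iff_leftLim_eq_rightLim.2 ?_
  have hleft := (cdf μ).measure_singleton x
  rw [measure_cdf, measure_singleton, eq_comm, ENNReal.ofReal_eq_zero, sub_nonpos] at hleft
  rw [(cdf μ).rightLim_eq]
  exact le_antisymm ((cdf μ).mono.leftLim_le le_rfl) hleft

open ProbabilityTheory in
theorem exists_measure_Ioi_eq_ofReal (μ : Measure ℝ) [IsProbabilityMeasure μ]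
    [NullSingletonClass μ] {p : ℝ} (hp₀ : 0 < p) (hp₁ : p < 1) :
    ∃ q, μ (Ioi q) = ENNReal.ofReal p := by
  obtain ⟨a, ha⟩ := ((tendsto_cdf_atBot μ).eventually_lt_const (sub_pos.2 hp₁)).exists
  obtain ⟨b, hb⟩ := ((tendsto_cdf_atTop μ).eventually_const_lt (sub_lt_self 1 hp₀)).exists
  obtain ⟨q, hq⟩ := intermediate_value_univ a b (continuous_cdf μ) ⟨ha.le, hb.le⟩
  refine ⟨q, ?_⟩
  rw [← compl_Iic, prob_compl_eq_one_sub measurableSet_Iic, ← ofReal_cdf, hq,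
    ← ENNReal.ofReal_one, ← ENNReal.ofReal_sub _ (sub_pos.2 hp₁).le, sub_sub_cancel]

open Finset in
theorem measure_pi_univ_pi_ite {ι α : Type*} [Fintype ι] [DecidableEq ι] [MeasurableSpace α]
    (μ : Measure α) [SigmaFinite μ] (A : Set α) (S : Finset ι) :
    Measure.pi (fun _ : ι => μ) (Set.pi Set.univ fun i => if i ∈ S then A else Aᶜ)
      = μ A ^ #S * μ Aᶜ ^ (Fintype.card ι - #S) := by
  rw [Measure.pi_pi, prod_apply_ite, prod_const, prod_const, filter_mem_eq_inter,
    Finset.univ_inter, filter_not, filter_mem_eq_inter, Finset.univ_inter, card_univ_sdiff]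

open Classical Finset in
theorem measure_pi_card_filter_mem_le {ι α : Type*} [Fintype ι] [MeasurableSpace α]
    (μ : Measure α) [SigmaFinite μ] (A : Set α) (k : ℕ) :
    Measure.pi (fun _ : ι => μ) {z | #{i | z i ∈ A} ≤ k}
      ≤ ∑ m ∈ range (k + 1),
          (Fintype.card ι).choose m * μ A ^ m * μ Aᶜ ^ (Fintype.card ι - m) := by
  have hcover : {z : ι → α | #{i | z i ∈ A} ≤ k} ⊆ ⋃ m ∈ range (k + 1),
      ⋃ S ∈ powersetCard m (univ : Finset ι),
        Set.pi Set.univ fun i => if i ∈ S then A else Aᶜ := by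
    intro z hz
    simp only [Set.mem_iUnion, exists_prop, Finset.mem_range, mem_powersetCard]
    refine ⟨_, Nat.lt_succ_of_le hz, _, ⟨subset_univ _, rfl⟩, fun i _ => ?_⟩
    by_cases hi : z i ∈ A <;> simp [hi]
  calc _ ≤ ∑ m ∈ range (k + 1), ∑ S ∈ powersetCard m (univ : Finset ι),
          Measure.pi (fun _ : ι => μ) (Set.pi Set.univ fun i => if i ∈ S then A else Aᶜ) :=
        (measure_mono hcover).trans <| (measure_biUnion_finset_le _ _).trans <|
          sum_le_sum fun m _ => measure_biUnion_finset_le _ _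
    _ = _ := by
        refine sum_congr rfl fun m _ => ?_
        rw [sum_congr rfl fun S hS => by rw [measure_pi_univ_pi_ite, (mem_powersetCard.1 hS).2],
          sum_const, card_powersetCard, card_univ, nsmul_eq_mul, mul_assoc]

open Finset in
theorem ENNReal.ofReal_sum_choose_mul_pow {p : ℝ} (hp₀ : 0 ≤ p) (hp₁ : p ≤ 1) (n k : ℕ) :
    ENNReal.ofReal (∑ i ∈ range (k + 1), (n.choose i : ℝ) * p ^ i * (1 - p) ^ (n - i))
      = ∑ i ∈ range (k + 1),
          (n.choose i : ℝ≥0∞) * ENNReal.ofReal p ^ i * ENNReal.ofReal (1 - p) ^ (n - i) := by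
  have h1p : 0 ≤ 1 - p := sub_nonneg.2 hp₁
  rw [ENNReal.ofReal_sum_of_nonneg fun i _ => by positivity]
  refine sum_congr rfl fun i _ => ?_
  rw [ENNReal.ofReal_mul (by positivity), ENNReal.ofReal_mul (by positivity),
    ENNReal.ofReal_pow hp₀, ENNReal.ofReal_pow h1p, ENNReal.ofReal_natCast]

theorem pac_confidence_sets_general
    {X Y : Type*} [MeasurableSpace X] [MeasurableSpace Y]
    (D : Measure (X × Y)) [IsProbabilityMeasure D]
    (f : X × Y → ℝ) (hf : Measurable f) (hfpos : ∀ p, 0 < f p)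
    (φ : X × Y → ℝ) (hφ : ∀ p, φ p = -Real.log (f p))
    (C : ℝ → X → Set Y) (hC : ∀ T x, C T x = {y : Y | Real.exp (-T) ≤ f (x, y)})
    (hatom : ∀ t : ℝ, D.map φ {t} = 0)
    (ε : ℝ) (hε : ε ∈ Set.Icc (0 : ℝ) 1)
    (n k : ℕ) (hk : k < n) :
    (Measure.pi fun _ : Fin n => D)
      {z : Fin n → X × Y |
        ENNReal.ofReal ε <
          D {p : X × Y | p.2 ∉ C (kthLargest k fun i => φ (z i)) p.1}}
      ≤ ENNReal.ofReal (∑ i ∈ Finset.range (k + 1),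
          (n.choose i : ℝ) * ε ^ i * (1 - ε) ^ (n - i)) := by
  obtain ⟨hε0, hε1⟩ := hε
  have hφ_meas : Measurable φ := funext hφ ▸ (Real.measurable_log.comp hf).neg
  have herror : ∀ T, {p : X × Y | p.2 ∉ C T p.1} = φ ⁻¹' Ioi T := fun T => by
    ext p
    simp only [mem_ofPred_eq, hC, mem_preimage, mem_Ioi, not_le, hφ, lt_neg,
      Real.log_lt_iff_lt_exp (hfpos p)]
  simp only [herror]
  rcases hε0.eq_or_lt with rfl | hε0
  · simpa [Finset.sum_range_succ'] using prob_le_one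
  rcases hε1.eq_or_lt with rfl | hε1
  · simp [fun s => not_lt.2 (prob_le_one (μ := D) (s := s))]
  have := Measure.isProbabilityMeasure_map (μ := D) hφ_meas.aemeasurable
  have : NullSingletonClass (D.map φ) := ⟨hatom⟩
  obtain ⟨q, hq⟩ := exists_measure_Ioi_eq_ofReal (D.map φ) hε0 hε1
  set A := φ ⁻¹' Ici q
  have hA : D A = ENNReal.ofReal ε := by
    rw [← Measure.map_apply hφ_meas measurableSet_Ici, ← measure_congr Ioi_ae_eq_Ici, hq]
  have hAc : D Aᶜ = ENNReal.ofReal (1 - ε) := by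
    rw [prob_compl_eq_one_sub (hφ_meas measurableSet_Ici), hA, ← ENNReal.ofReal_one,
      ← ENNReal.ofReal_sub _ hε0.le]
  classical
  have hbad :
      {z : Fin n → X × Y | ENNReal.ofReal ε < D (φ ⁻¹' Ioi (kthLargest k fun i => φ (z i)))} ⊆
        {z | (Finset.univ.filter fun i => z i ∈ A).card ≤ k} := fun z hz => by
    rw [mem_ofPred_eq, ← Measure.map_apply hφ_meas measurableSet_Ioi, ← hq] at hz
    have hT : (kthLargest k fun i => φ (z i)) < q :=
      lt_of_not_ge fun h => (measure_mono (Ioi_subset_Ioi h)).not_gt hz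
    simpa [A] using card_filter_le_of_kthLargest_lt hk hT
  refine (measure_mono hbad).trans <| (measure_pi_card_filter_mem_le D A k).trans_eq ?_
  rw [hA, hAc, Fintype.card_fin, ← ENNReal.ofReal_sum_choose_mul_pow hε0.le hε1.le]

/-- **Theorem 1 (PAC confidence sets).** If the pushforward of `D` under
`φ (x,y) = -log f (x,y)` has no atoms, then the probability (over an i.i.d. validation sample
`z` of size `n`) that the confidence set predictor `C_{T̂(z)}` has true error greater than `ε`
is at most the binomial tail `∑_{i=0}^k (n choose i) ε^i (1-ε)^(n-i)`, where `T̂(z)` is the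
`(k+1)`-st largest value among `φ(z₁), …, φ(z_n)`. -/
theorem pac_confidence_sets
    {X Y : Type*} [MeasurableSpace X] [MeasurableSpace Y]
    (D : Measure (X × Y)) [IsProbabilityMeasure D]
    (f : X × Y → ℝ) (hf : Measurable f) (hfpos : ∀ p, 0 < f p)
    (φ : X × Y → ℝ) (hφ : ∀ p, φ p = -Real.log (f p))
    (C : ℝ → X → Set Y) (hC : ∀ T x, C T x = {y : Y | Real.exp (-T) ≤ f (x, y)})
    (hatom : ∀ t : ℝ, D.map φ {t} = 0)
    (ε : ℝ) (hε : ε ∈ Set.Icc (0 : ℝ) 1)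
    (n k : ℕ) (hn : 1 ≤ n) (hk : k < n) :
    (Measure.pi fun _ : Fin n => D)
      {z : Fin n → X × Y |
        ENNReal.ofReal ε <
          D {p : X × Y | p.2 ∉ C (kthLargest k fun i => φ (z i)) p.1}}
      ≤ ENNReal.ofReal (∑ i ∈ Finset.range (k + 1),
          (n.choose i : ℝ) * ε ^ i * (1 - ε) ^ (n - i)) :=
  pac_confidence_sets_general D f hf hfpos φ hφ C hC hatom ε hε n k hk
end

section
/- Let μ be a probability measure on ℝ with no atoms, let ε ∈ [0,1], n ∈ ℕ with n ≥ 1, and k ∈ ℕ with k < n. For t ∈ ℝⁿ let T̂(t) be the (k+1)-st largest coordinate of t. Then the n-fold product measure μ^⊗n of the set { t ∈ ℝⁿ : μ((T̂(t), ∞)) > ε } is at most Σ_{i=0}^{k} (n choose i) ε^i (1-ε)^{n-i}. -/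
open MeasureTheory Set
open scoped ENNReal

/-!
For `0 < ε < 1`, continuity of the CDF of the atomless measure `μ` gives a level `q` with
`μ (Ioi q) = ε`. If the tail above the `(k+1)`-st largest sample value has mass `> ε`, that value
lies below `q`, so at most `k` of the `n` samples exceed `q`. The number of samples exceeding `q`
is binomial with parameters `n` and `ε`, so this has probability at most the binomial tail.
-/

open Finset ProbabilityTheory

namespace ProbabilityTheory

lemma continuous_cdf_s1 (μ : Measure ℝ) [IsProbabilityMeasure μ] [NullSingletonClass μ] :
    Continuous (cdf μ) := by
  refine continuous_iff_continuousAt.2 fun x => ?_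
  rw [(monotone_cdf μ).continuousAt_iff_leftLim_eq_rightLim, (cdf μ).rightLim_eq]
  have hjump : ENNReal.ofReal (cdf μ x - Function.leftLim (cdf μ) x) = 0 := by
    rw [← (cdf μ).measure_singleton, measure_cdf, measure_singleton]
  have hle := (monotone_cdf μ).leftLim_le (le_refl x)
  rw [ENNReal.ofReal_eq_zero] at hjump
  linarith

lemma Ioo_subset_range_cdf (μ : Measure ℝ) [IsProbabilityMeasure μ] [NullSingletonClass μ] :
    Set.Ioo (0 : ℝ) 1 ⊆ Set.range (cdf μ) := fun _ hp =>
  mem_range_of_exists_le_of_exists_ge (continuous_cdf_s1 μ)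
    ((tendsto_cdf_atBot μ).eventually_le_const hp.1).exists
    ((tendsto_cdf_atTop μ).eventually_const_le hp.2).exists

end ProbabilityTheory

lemma List.Pairwise.countP_lt_le {α : Type*} [LinearOrder α] {l : List α}
    (hl : l.Pairwise (· ≤ ·)) {j : ℕ} (hj : j < l.length) {q : α} (hq : l[j] < q) :
    l.countP (fun x => q < x) ≤ l.length - (j + 1) := by
  have htake : (l.take (j + 1)).countP (fun x => q < x) = 0 := by
    refine List.countP_eq_zero.2 fun x hx => ?_
    obtain ⟨i, hi, rfl⟩ := List.getElem_of_mem hx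
    have hij : i ≤ j := by rw [List.length_take] at hi; omega
    rw [List.getElem_take]
    simpa using (hl.rel_get_of_le (a := ⟨i, by omega⟩) (b := ⟨j, hj⟩) hij).trans hq.le
  calc l.countP (fun x => q < x)
      = (l.take (j + 1)).countP (fun x => q < x) + (l.drop (j + 1)).countP (fun x => q < x) := by
        rw [← List.countP_append, List.take_append_drop]
    _ ≤ (l.drop (j + 1)).length := by rw [htake, zero_add]; exact List.countP_le_length
    _ = l.length - (j + 1) := List.length_drop

lemma card_lt_le_of_kthLargest_lt {n k : ℕ} (hk : k < n) {q : ℝ} {t : Fin n → ℝ}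
    (h : kthLargest k t < q) : #{i | q < t i} ≤ k := by
  rw [kthLargest] at h
  generalize hl : Multiset.sort (↑(List.ofFn t) : Multiset ℝ) (· ≤ ·) = l at h
  have hsorted : l.Pairwise (· ≤ ·) := hl ▸ Multiset.pairwise_sort _ _
  have hlen : l.length = n := by simp [← hl]
  have hcount : #{i | q < t i} = l.countP (fun x => q < x) := by
    rw [← Multiset.coe_countP, ← hl, Multiset.sort_eq, ← Fin.univ_val_map,
      Multiset.countP_map]
    rfl
  have hj : n - 1 - k < l.length := by omega
  rw [List.getD_eq_getElem _ _ hj] at h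
  have := hsorted.countP_lt_le hj h
  omega

section Binomial

variable {ι α : Type*} [Fintype ι] [DecidableEq ι] [MeasurableSpace α] (μ : Measure α)
  [SigmaFinite μ]

lemma measure_pi_ite_compl (A : Set α) (S : Finset ι) :
    Measure.pi (fun _ : ι => μ) (univ.pi fun i => if i ∈ S then A else Aᶜ) =
      μ A ^ #S * μ Aᶜ ^ (Fintype.card ι - #S) := by
  simp_rw [Measure.pi_pi, apply_ite μ]
  rw [prod_ite, prod_const, prod_const]
  simp [filter_not, card_univ_sdiff]

lemma measure_pi_setOf_card_le (A : Set α) [DecidablePred (· ∈ A)] (k : ℕ) :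
    Measure.pi (fun _ : ι => μ) {t | #{i | t i ∈ A} ≤ k} ≤
      ∑ j ∈ range (k + 1),
        (Fintype.card ι).choose j * μ A ^ j * μ Aᶜ ^ (Fintype.card ι - j) := by
  have hcover : {t : ι → α | #{i | t i ∈ A} ≤ k} ⊆ ⋃ j ∈ range (k + 1),
      ⋃ S ∈ powersetCard j (univ : Finset ι),
        univ.pi fun i => if i ∈ S then A else Aᶜ := by
    intro t ht
    simp only [Set.mem_iUnion, Finset.mem_range, mem_powersetCard]
    refine ⟨_, Nat.lt_succ_of_le ht, _, ⟨subset_univ _, rfl⟩, fun i _ => ?_⟩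
    by_cases hi : t i ∈ A <;> simp [hi]
  calc Measure.pi (fun _ : ι => μ) {t | #{i | t i ∈ A} ≤ k}
      ≤ ∑ j ∈ range (k + 1), ∑ S ∈ powersetCard j (univ : Finset ι),
          Measure.pi (fun _ : ι => μ) (univ.pi fun i => if i ∈ S then A else Aᶜ) :=
        (measure_mono hcover).trans <| (measure_biUnion_finset_le _ _).trans <|
          sum_le_sum fun j _ => measure_biUnion_finset_le _ _
    _ = ∑ j ∈ range (k + 1),
          (Fintype.card ι).choose j * μ A ^ j * μ Aᶜ ^ (Fintype.card ι - j) := by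
        refine sum_congr rfl fun j _ => ?_
        rw [sum_congr rfl fun S hS => by rw [measure_pi_ite_compl, (mem_powersetCard.1 hS).2],
          sum_const, card_powersetCard, card_univ, nsmul_eq_mul, mul_assoc]

end Binomial

theorem threshold_pac_bound_general
    (μ : Measure ℝ) [IsProbabilityMeasure μ]
    (hatom : ∀ t : ℝ, μ {t} = 0)
    (ε : ℝ) (hε : ε ∈ Set.Icc (0 : ℝ) 1)
    (n k : ℕ) (hk : k < n) :
    (Measure.pi fun _ : Fin n => μ)
      {t : Fin n → ℝ | ENNReal.ofReal ε < μ (Set.Ioi (kthLargest k t))}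
      ≤ ENNReal.ofReal (∑ i ∈ Finset.range (k + 1),
          (n.choose i : ℝ) * ε ^ i * (1 - ε) ^ (n - i)) := by
  obtain ⟨hε0, hε1⟩ := hε
  rcases hε0.eq_or_lt with rfl | hpos
  · simpa [sum_range_succ'] using prob_le_one
  rcases hε1.eq_or_lt with rfl | hlt
  · have hempty : {t : Fin n → ℝ | ENNReal.ofReal 1 < μ (Ioi (kthLargest k t))} = ∅ := by
      simp [Set.eq_empty_iff_forall_notMem, prob_le_one]
    rw [hempty, measure_empty]
    exact zero_le
  have : NullSingletonClass μ := ⟨hatom⟩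
  obtain ⟨q, hq⟩ :=
    Ioo_subset_range_cdf μ (show 1 - ε ∈ Set.Ioo 0 1 from ⟨by linarith, by linarith⟩)
  have hIic : μ (Ioi q)ᶜ = ENNReal.ofReal (1 - ε) := by rw [compl_Ioi, ← ofReal_cdf, hq]
  have hIoi : μ (Ioi q) = ENNReal.ofReal ε := by
    rw [← compl_compl (Ioi q), prob_compl_eq_one_sub measurableSet_Ioi.compl, hIic,
      ← ENNReal.ofReal_one, ← ENNReal.ofReal_sub _ (by linarith), sub_sub_cancel]
  have hsub : {t : Fin n → ℝ | ENNReal.ofReal ε < μ (Ioi (kthLargest k t))} ⊆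
      {t | #{i | t i ∈ Ioi q} ≤ k} := fun t ht =>
    card_lt_le_of_kthLargest_lt hk <| lt_of_not_ge fun hge =>
      ht.not_ge (hIoi ▸ measure_mono (Ioi_subset_Ioi hge))
  calc _ ≤ _ := measure_mono hsub
    _ ≤ _ := measure_pi_setOf_card_le μ (Ioi q) k
    _ = _ := by
      have h1ε : 0 ≤ 1 - ε := by linarith
      rw [hIoi, hIic, Fintype.card_fin,
        ENNReal.ofReal_sum_of_nonneg fun i _ => by positivity]
      refine sum_congr rfl fun i _ => ?_
      rw [ENNReal.ofReal_mul (by positivity), ENNReal.ofReal_mul (by positivity),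
        ENNReal.ofReal_natCast, ENNReal.ofReal_pow hε0, ENNReal.ofReal_pow h1ε]

/-- **Threshold form of Theorem 1.** For an atomless probability measure `μ` on `ℝ`, the
probability (over an i.i.d. sample `t` of size `n` from `μ`) that the upper tail above the
`(k+1)`-st largest sample value exceeds `ε` is at most the binomial tail
`∑_{i=0}^k (n choose i) ε^i (1-ε)^(n-i)`. -/
theorem threshold_pac_bound
    (μ : Measure ℝ) [IsProbabilityMeasure μ]
    (hatom : ∀ t : ℝ, μ {t} = 0)
    (ε : ℝ) (hε : ε ∈ Set.Icc (0 : ℝ) 1)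
    (n k : ℕ) (hn : 1 ≤ n) (hk : k < n) :
    (Measure.pi fun _ : Fin n => μ)
      {t : Fin n → ℝ | ENNReal.ofReal ε < μ (Set.Ioi (kthLargest k t))}
      ≤ ENNReal.ofReal (∑ i ∈ Finset.range (k + 1),
          (n.choose i : ℝ) * ε ^ i * (1 - ε) ^ (n - i)) :=
  threshold_pac_bound_general μ hatom ε hε n k hk
end

section
/- Let X and Y be measurable spaces, D a probability measure on X × Y, and f : X × Y → ℝ a measurable function with f(x,y) > 0 for all (x,y). Define φ(x,y) = -log f(x,y) and, for T ∈ ℝ, C_T(x) = {y ∈ Y : f(x,y) ≥ exp(-T)}. Assume the pushforward of D under φ has no atoms. Fix ε ∈ [0,1], δ ∈ (0,1), n ∈ ℕ with n ≥ 1, and k ∈ ℕ with k < n such that Σ_{i=0}^{k} (n choose i) ε^i (1-ε)^{n-i} < δ. For z ∈ (X×Y)ⁿ let T̂(z) be the (k+1)-st largest value among φ(z₁),…,φ(z_n). Then D^⊗n({ z : D({(x,y) : y ∉ C_{T̂(z)}(x)}) > ε }) < δ; i.e., the algorithm is probably approximately correct. -/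
open MeasureTheory Set Filter
open scoped ENNReal

lemma sorted_getD_lt_iff (l : List ℝ) (hl : l.Pairwise (· ≤ ·)) (q : ℝ) (k : ℕ)
    (hk : k < l.length) :
    l.getD (l.length - 1 - k) 0 < q ↔ l.countP (fun a => decide (q ≤ a)) ≤ k := by
  set n := l.length with hn
  set j := n - 1 - k with hj
  have hjn : j < n := by omega
  have hget : l.getD j 0 = l[j] := List.getD_eq_getElem l 0 hjn
  have hpair := List.pairwise_iff_getElem.mp hl
  constructor
  · intro h
    rw [hget] at h
    have hsplit : l = l.take (j+1) ++ l.drop (j+1) := (List.take_append_drop _ _).symm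
    have hcnt : l.countP (fun a => decide (q ≤ a)) =
        (l.take (j+1)).countP (fun a => decide (q ≤ a)) +
        (l.drop (j+1)).countP (fun a => decide (q ≤ a)) := by
      conv_lhs => rw [hsplit]
      exact List.countP_append
    rw [hcnt]
    have h1 : (l.take (j+1)).countP (fun a => decide (q ≤ a)) = 0 := by
      rw [List.countP_eq_zero]
      intro a ha
      obtain ⟨i, hi, rfl⟩ := List.getElem_of_mem ha
      have hi' : i < j + 1 := lt_of_lt_of_le hi (by simp [List.length_take])
      rw [List.getElem_take] at *
      simp only [decide_eq_true_eq, not_le]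
      rcases eq_or_lt_of_le (Nat.lt_succ_iff.mp hi') with h2 | h2
      · subst h2; exact h
      · exact lt_of_le_of_lt (hpair i j (by omega) (by omega) h2) h
    have h2 : (l.drop (j+1)).countP (fun a => decide (q ≤ a)) ≤ k := by
      calc _ ≤ (l.drop (j+1)).length := List.countP_le_length
        _ ≤ k := by rw [List.length_drop]; omega
    omega
  · intro h
    rw [hget]
    by_contra hq
    push_neg at hq
    have hsplit : l = l.take j ++ l.drop j := (List.take_append_drop _ _).symm
    have hcnt : l.countP (fun a => decide (q ≤ a)) =
        (l.take j).countP (fun a => decide (q ≤ a)) +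
        (l.drop j).countP (fun a => decide (q ≤ a)) := by
      conv_lhs => rw [hsplit]
      exact List.countP_append
    have hall : (l.drop j).countP (fun a => decide (q ≤ a)) = (l.drop j).length := by
      rw [List.countP_eq_length]
      intro a ha
      obtain ⟨i, hi, rfl⟩ := List.getElem_of_mem ha
      have hi' : i < n - j := by simpa [List.length_drop] using hi
      rw [List.getElem_drop]
      simp only [decide_eq_true_eq]
      rcases Nat.eq_zero_or_pos i with h2 | h2
      · subst h2; simpa using hq
      · exact le_trans hq (hpair j (j+i) (by omega) (by omega) (by omega))
    have hdl : (l.drop j).length = k + 1 := by rw [List.length_drop]; omega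
    omega

lemma kthLargest_lt_iff {n k : ℕ} (hk : k < n) (t : Fin n → ℝ) (q : ℝ) :
    kthLargest k t < q ↔
      (Finset.univ.filter fun i => q ≤ t i).card ≤ k := by
  classical
  set l := Multiset.sort (↑(List.ofFn t) : Multiset ℝ) (· ≤ ·) with hl
  have hlen : l.length = n := by rw [hl, Multiset.length_sort]; simp
  have hsorted : l.Pairwise (· ≤ ·) := Multiset.pairwise_sort _ _
  have hcount : l.countP (fun a => decide (q ≤ a)) =
      (Finset.univ.filter fun i => q ≤ t i).card := by
    have h1 : (l.countP (fun a => decide (q ≤ a)) : ℕ) =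
        Multiset.countP (fun a => q ≤ a) (↑(List.ofFn t) : Multiset ℝ) := by
      rw [hl, ← Multiset.coe_countP]
      congr 1
      exact Multiset.sort_eq _ _
    have h2 : (↑(List.ofFn t) : Multiset ℝ) =
        Multiset.map (fun i => t i) Finset.univ.val := by
      rw [Fin.univ_def]
      simp [List.ofFn_eq_map]
    rw [h1, h2, Multiset.countP_map]
    rw [Finset.card, Finset.filter_val]
  have key := sorted_getD_lt_iff l hsorted q k (by omega)
  rw [hlen] at key
  unfold kthLargest
  rw [← hl, key, hcount]


open scoped Classical in
lemma binom_bound {Ω : Type*} [MeasurableSpace Ω] (μ : Measure Ω) [IsProbabilityMeasure μ]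
    (A : Set Ω) (hA : MeasurableSet A) (n k : ℕ) :
    (Measure.pi fun _ : Fin n => μ)
      {z : Fin n → Ω | (Finset.univ.filter fun i => z i ∈ A).card ≤ k}
      = ∑ j ∈ Finset.range (k + 1), (n.choose j : ℝ≥0∞) * μ A ^ j * (1 - μ A) ^ (n - j) := by
  classical
  set B : Finset (Fin n) → Set (Fin n → Ω) :=
    fun S => Set.pi Set.univ (fun i => if i ∈ S then A else Aᶜ) with hB
  have hmem : ∀ S z, z ∈ B S ↔ ∀ i, (i ∈ S ↔ z i ∈ A) := by
    intro S z
    simp only [hB, Set.mem_pi, Set.mem_univ, forall_true_left]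
    constructor
    · intro h i
      have hzi := h i
      by_cases hi : i ∈ S
      · simp [hi] at hzi; tauto
      · simp [hi] at hzi; tauto
    · intro h i
      by_cases hi : i ∈ S
      · simp [hi]; exact (h i).mp hi
      · simp [hi]; exact fun hz => hi ((h i).mpr hz)
  have hunion : {z : Fin n → Ω | (Finset.univ.filter fun i => z i ∈ A).card ≤ k}
      = ⋃ S ∈ Finset.univ.filter (fun S : Finset (Fin n) => S.card ≤ k), B S := by
    ext z
    simp only [Set.mem_setOf_eq, Set.mem_iUnion, Finset.mem_filter, Finset.mem_univ, true_and]
    constructor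
    · intro h
      exact ⟨Finset.univ.filter fun i => z i ∈ A, h, (hmem _ z).mpr (by simp)⟩
    · rintro ⟨S, hS, hz⟩
      have : Finset.univ.filter (fun i => z i ∈ A) = S := by
        ext i; simp [(hmem S z).mp hz i]
      rwa [this]
  have hmeasB : ∀ S : Finset (Fin n), MeasurableSet (B S) := by
    intro S
    exact MeasurableSet.univ_pi fun i => by by_cases hi : i ∈ S <;> simp [hi, hA, hA.compl]
  have hdisj : (Finset.univ.filter (fun S : Finset (Fin n) => S.card ≤ k) : Set (Finset (Fin n))).PairwiseDisjoint B := by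
    intro S hS S' hS' hne
    simp only [Function.onFun, Set.disjoint_left]
    intro z hz hz'
    apply hne
    ext i
    rw [(hmem S z).mp hz i, (hmem S' z).mp hz' i]
  have hmeasure : ∀ S : Finset (Fin n),
      (Measure.pi fun _ : Fin n => μ) (B S) = μ A ^ S.card * (1 - μ A) ^ (n - S.card) := by
    intro S
    rw [hB]
    rw [Measure.pi_pi]
    have hcompl : μ Aᶜ = 1 - μ A := prob_compl_eq_one_sub hA
    calc ∏ i : Fin n, μ (if i ∈ S then A else Aᶜ)
        = ∏ i : Fin n, (if i ∈ S then μ A else 1 - μ A) := by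
          apply Finset.prod_congr rfl; intro i _; by_cases hi : i ∈ S <;> simp [hi, hcompl]
      _ = μ A ^ S.card * (1 - μ A) ^ (n - S.card) := by
          rw [Finset.prod_ite, Finset.prod_const, Finset.prod_const]
          congr 1
          · congr 1; simp
          · congr 1
            have he : Finset.filter (fun x => x ∉ S) Finset.univ = Finset.univ \ S := by
              ext i; simp
            rw [he, Finset.card_univ_diff, Fintype.card_fin]
  rw [hunion, measure_biUnion_finset hdisj (fun S _ => hmeasB S)]
  have hsplit := Finset.sum_fiberwise_of_maps_to
    (s := Finset.univ.filter (fun S : Finset (Fin n) => S.card ≤ k))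
    (t := Finset.range (k+1)) (g := Finset.card)
    (by intro S hS; simp at hS ⊢; omega)
    (fun S => (Measure.pi fun _ : Fin n => μ) (B S))
  rw [← hsplit]
  apply Finset.sum_congr rfl
  intro j hj
  have hfib : (Finset.univ.filter (fun S : Finset (Fin n) => S.card ≤ k)).filter
      (fun S => S.card = j) = Finset.powersetCard j Finset.univ := by
    ext S
    simp [Finset.mem_powersetCard_univ]
    simp at hj
    omega
  rw [hfib]
  have : ∀ S ∈ Finset.powersetCard j Finset.univ,
      (Measure.pi fun _ : Fin n => μ) (B S) = μ A ^ j * (1 - μ A) ^ (n - j) := by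
    intro S hS
    rw [hmeasure S, Finset.mem_powersetCard_univ.mp hS]
  rw [Finset.sum_congr rfl this, Finset.sum_const, Finset.card_powersetCard, Finset.card_univ,
    Fintype.card_fin, nsmul_eq_mul, mul_assoc]

section helpers
variable {X Y : Type*} [MeasurableSpace X] [MeasurableSpace Y]

lemma exists_quantile (D : Measure (X × Y)) [IsProbabilityMeasure D]
    (φ : X × Y → ℝ) (hφm : Measurable φ)
    (hatom : ∀ t : ℝ, D.map φ {t} = 0)
    (ε : ℝ) (hε0 : 0 < ε) (hε1 : ε ≤ 1)
    (hex : ∃ t₀ : ℝ, ENNReal.ofReal ε < D {p | t₀ < φ p}) :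
    ∃ q : ℝ, D {p | q ≤ φ p} = ENNReal.ofReal ε ∧
      (∀ T : ℝ, ENNReal.ofReal ε < D {p | T < φ p} ↔ T < q) := by
  set ε' := ENNReal.ofReal ε with hε'
  have hε'0 : 0 < ε' := ENNReal.ofReal_pos.mpr hε0
  set G : ℝ → ℝ≥0∞ := fun T => D {p | T < φ p} with hG
  have hGanti : Antitone G := fun T T' h => measure_mono fun p hp => lt_of_le_of_lt h hp
  set S : Set ℝ := {T | G T ≤ ε'} with hS
  obtain ⟨t₀, ht₀⟩ := hex
  -- S nonempty
  have hSne : S.Nonempty := by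
    have hanti : Antitone (fun m : ℕ => {p : X × Y | (m:ℝ) < φ p}) := by
      intro m m' h p hp
      exact lt_of_le_of_lt (Nat.cast_le.mpr h : (m:ℝ) ≤ m') hp
    have hempty : (⋂ m : ℕ, {p : X × Y | (m:ℝ) < φ p}) = ∅ := by
      rw [eq_empty_iff_forall_notMem]
      intro p hp
      obtain ⟨m, hm⟩ := exists_nat_gt (φ p)
      exact absurd (Set.mem_iInter.mp hp m) (not_lt.mpr hm.le)
    have htend := tendsto_measure_iInter_atTop (μ := D)
      (s := fun m : ℕ => {p : X × Y | (m:ℝ) < φ p})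
      (fun m => (measurableSet_lt measurable_const hφm).nullMeasurableSet)
      hanti ⟨0, measure_ne_top D _⟩
    rw [hempty, measure_empty] at htend
    obtain ⟨m, hm⟩ := (htend.eventually_lt_const hε'0).exists
    exact ⟨(m : ℝ), hm.le⟩
  have hbdd : BddBelow S := by
    refine ⟨t₀, fun s hs => ?_⟩
    by_contra h
    push_neg at h
    exact absurd (le_trans (hGanti h.le) hs) (not_le.mpr ht₀)
  set q := sInf S with hq
  have h_lt_q : ∀ T, T < q → ε' < G T := by
    intro T hT
    by_contra h
    push_neg at h
    exact absurd (csInf_le hbdd h) (not_le.mpr hT)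
  have h_gt_q : ∀ T, q < T → G T ≤ ε' := by
    intro T hT
    obtain ⟨s, hs, hsT⟩ := exists_lt_of_csInf_lt hSne hT
    exact le_trans (hGanti hsT.le) hs
  -- G q ≤ ε'
  have hGq_le : G q ≤ ε' := by
    have hmono : Monotone (fun m : ℕ => {p : X × Y | q + 1/(m+1) < φ p}) := by
      intro m m' h p hp
      refine lt_of_le_of_lt (add_le_add_right ?_ q) hp
      apply one_div_le_one_div_of_le
      · positivity
      · exact_mod_cast by exact_mod_cast add_le_add_left (Nat.cast_le.mpr h) 1
    have hun : {p : X × Y | q < φ p} = ⋃ m : ℕ, {p : X × Y | q + 1/(m+1) < φ p} := by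
      ext p
      simp only [Set.mem_setOf_eq, Set.mem_iUnion]
      constructor
      · intro h
        obtain ⟨m, hm⟩ := exists_nat_one_div_lt (sub_pos.mpr h)
        exact ⟨m, by push_cast at hm ⊢; linarith⟩
      · rintro ⟨m, hm⟩
        have : (0:ℝ) < 1/(m+1) := by positivity
        linarith
    rw [hG]
    simp only []
    rw [hun, hmono.directed_le.measure_iUnion]
    refine iSup_le fun m => h_gt_q _ ?_
    have : (0:ℝ) < 1/(m+1) := by positivity
    linarith
  -- ε' ≤ D {q ≤ φ}
  have hGeq_ge : ε' ≤ D {p | q ≤ φ p} := by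
    have hanti : Antitone (fun m : ℕ => {p : X × Y | q - 1/(m+1) < φ p}) := by
      intro m m' h p hp
      refine lt_of_le_of_lt (sub_le_sub_left ?_ q) hp
      apply one_div_le_one_div_of_le
      · positivity
      · exact_mod_cast add_le_add_left (Nat.cast_le.mpr h) 1
    have hint : (⋂ m : ℕ, {p : X × Y | q - 1/(m+1) < φ p}) = {p | q ≤ φ p} := by
      ext p
      simp only [Set.mem_iInter, Set.mem_setOf_eq]
      constructor
      · intro h
        by_contra hc
        push_neg at hc
        obtain ⟨m, hm⟩ := exists_nat_one_div_lt (sub_pos.mpr hc)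
        have := h m
        push_cast at hm this
        linarith
      · intro h m
        have : (0:ℝ) < 1/(m+1) := by positivity
        linarith
    have htend := tendsto_measure_iInter_atTop (μ := D)
      (s := fun m : ℕ => {p : X × Y | q - 1/(m+1) < φ p})
      (fun m => (measurableSet_lt measurable_const hφm).nullMeasurableSet)
      hanti ⟨0, measure_ne_top D _⟩
    rw [hint] at htend
    refine ge_of_tendsto htend (Filter.Eventually.of_forall fun m => ?_)
    refine (h_lt_q _ ?_).le
    have : (0:ℝ) < 1/(m+1) := by positivity
    linarith
  have hq0 : D {p | φ p = q} = 0 := by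
    have := hatom q
    rw [Measure.map_apply hφm (measurableSet_singleton q)] at this
    have h2 : φ ⁻¹' {q} = {p | φ p = q} := by ext p; simp
    rwa [h2] at this
  have hDA_le : D {p | q ≤ φ p} ≤ ε' := by
    have hsub : {p : X × Y | q ≤ φ p} ⊆ {p | q < φ p} ∪ {p | φ p = q} := by
      intro p hp
      rcases lt_or_eq_of_le (show q ≤ φ p from hp) with h | h
      · exact Or.inl h
      · exact Or.inr h.symm
    calc D {p | q ≤ φ p} ≤ D ({p | q < φ p} ∪ {p | φ p = q}) := measure_mono hsub
      _ ≤ D {p | q < φ p} + D {p | φ p = q} := measure_union_le _ _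
      _ = G q + 0 := by rw [hq0]
      _ ≤ ε' := by rw [add_zero]; exact hGq_le
  refine ⟨q, le_antisymm hDA_le hGeq_ge, fun T => ⟨?_, h_lt_q T⟩⟩
  intro hT
  by_contra h
  push_neg at h
  exact absurd (le_trans (hGanti h) hGq_le) (not_le.mpr hT)
end helpers

open scoped Classical

/-- **Corollary of Theorem 1 (the algorithm is PAC).** If `k` is chosen so that the binomial
tail `∑_{i=0}^k (n choose i) ε^i (1-ε)^(n-i)` is below `δ`, then with probability at least
`1 - δ` over the validation sample `z`, the confidence set predictor `C_{T̂(z)}` has true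
error at most `ε`. -/
theorem pac_confidence_sets_corollary
    {X Y : Type*} [MeasurableSpace X] [MeasurableSpace Y]
    (D : Measure (X × Y)) [IsProbabilityMeasure D]
    (f : X × Y → ℝ) (hf : Measurable f) (hfpos : ∀ p, 0 < f p)
    (φ : X × Y → ℝ) (hφ : ∀ p, φ p = -Real.log (f p))
    (C : ℝ → X → Set Y) (hC : ∀ T x, C T x = {y : Y | Real.exp (-T) ≤ f (x, y)})
    (hatom : ∀ t : ℝ, D.map φ {t} = 0)
    (ε δ : ℝ) (hε : ε ∈ Set.Icc (0 : ℝ) 1) (hδ : δ ∈ Set.Ioo (0 : ℝ) 1)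
    (n k : ℕ) (hn : 1 ≤ n) (hk : k < n)
    (htail : ∑ i ∈ Finset.range (k + 1),
        (n.choose i : ℝ) * ε ^ i * (1 - ε) ^ (n - i) < δ) :
    (Measure.pi fun _ : Fin n => D)
      {z : Fin n → X × Y |
        ENNReal.ofReal ε <
          D {p : X × Y | p.2 ∉ C (kthLargest k fun i => φ (z i)) p.1}}
      < ENNReal.ofReal δ := by
  have hε0 : 0 < ε := by
    rcases lt_or_eq_of_le hε.1 with h | h
    · exact h
    · exfalso
      have hsum : ∑ i ∈ Finset.range (k + 1),
          (n.choose i : ℝ) * ε ^ i * (1 - ε) ^ (n - i) = 1 := by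
        rw [← h]
        rw [Finset.sum_eq_single 0]
        · simp
        · intro i _ hi; simp [zero_pow hi]
        · simp
      rw [hsum] at htail
      linarith [hδ.2]
  have hφm : Measurable φ := by
    have hfe : φ = fun p => -Real.log (f p) := funext hφ
    rw [hfe]
    exact (Real.measurable_log.comp hf).neg
  have hCset : ∀ T : ℝ, {p : X × Y | p.2 ∉ C T p.1} = {p | T < φ p} := by
    intro T
    ext p
    simp only [Set.mem_setOf_eq, hC, hφ, Prod.mk.eta]
    constructor
    · intro h
      have h2 : f p < Real.exp (-T) := not_le.mp h
      have h3 := (Real.log_lt_iff_lt_exp (hfpos p)).mpr h2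
      linarith
    · intro h hcon
      have h2 : -T ≤ Real.log (f p) := (Real.le_log_iff_exp_le (hfpos p)).mpr hcon
      linarith
  simp_rw [hCset]
  by_cases hex : ∃ t₀ : ℝ, ENNReal.ofReal ε < D {p | t₀ < φ p}
  · obtain ⟨q, hqA, hqiff⟩ := exists_quantile D φ hφm hatom ε hε0 hε.2 hex
    set A : Set (X × Y) := {p | q ≤ φ p} with hA'
    have hA : MeasurableSet A := measurableSet_le measurable_const hφm
    have hset : {z : Fin n → X × Y |
        ENNReal.ofReal ε < D {p | kthLargest k (fun i => φ (z i)) < φ p}}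
        = {z : Fin n → X × Y | (Finset.univ.filter fun i => z i ∈ A).card ≤ k} := by
      ext z
      simp only [Set.mem_setOf_eq]
      rw [hqiff, kthLargest_lt_iff hk]
      have hfc : Finset.filter (fun i => q ≤ φ (z i)) Finset.univ
          = Finset.filter (fun i => z i ∈ A) Finset.univ :=
        Finset.filter_congr (fun i _ => Iff.rfl)
      rw [hfc]
    rw [hset, binom_bound D A hA n k, hqA]
    have h1ε : (1 : ℝ≥0∞) - ENNReal.ofReal ε = ENNReal.ofReal (1 - ε) := by
      rw [ENNReal.ofReal_sub 1 hε.1, ENNReal.ofReal_one]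
    rw [h1ε]
    have hterm : ∀ j, (n.choose j : ℝ≥0∞) * ENNReal.ofReal ε ^ j
        * ENNReal.ofReal (1 - ε) ^ (n - j)
        = ENNReal.ofReal ((n.choose j : ℝ) * ε ^ j * (1 - ε) ^ (n - j)) := by
      intro j
      rw [← ENNReal.ofReal_pow hε.1, ← ENNReal.ofReal_pow (by linarith [hε.2]),
        ← ENNReal.ofReal_natCast, ← ENNReal.ofReal_mul (by positivity),
        ← ENNReal.ofReal_mul (by positivity)]
    simp_rw [hterm]
    rw [← ENNReal.ofReal_sum_of_nonneg (fun j _ => by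
      have h1 : (0:ℝ) ≤ 1 - ε := by linarith [hε.2]
      positivity)]
    exact (ENNReal.ofReal_lt_ofReal_iff hδ.1).mpr htail
  · push_neg at hex
    have hempty : {z : Fin n → X × Y |
        ENNReal.ofReal ε < D {p | kthLargest k (fun i => φ (z i)) < φ p}} = ∅ := by
      rw [Set.eq_empty_iff_forall_notMem]
      intro z hz
      exact absurd (hex _) (not_le.mpr hz)
    rw [hempty, measure_empty]
    exact ENNReal.ofReal_pos.mpr hδ.1
end
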